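/- For all real numbers q and k, the Euclidean inner product satisfies φ(q, 1) · φ(k, 1) ≤ 1, and the inequality is strict whenever q ≠ k; hence over all k, the inner product φ(q, 1) · φ(k, 1) is uniquely maximized (with value 1) at k = q. -/

import Mathlib

open scoped RealInnerProductSpace

/-- Layer norm: subtract the mean, then normalize to unit Euclidean norm. -/
noncomputable def layerNorm {ι : Type*} [Fintype ι] (v : EuclideanSpace ℝ ι) :
    EuclideanSpace ℝ ι :=
  let c : EuclideanSpace ℝ ι := WithLp.toLp 2 (fun j => v j - (∑ l, v l) / (Fintype.card ι))
  ‖c‖⁻¹ • c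

/-- The layer-norm hash φ(x, y) = layer_norm(⟨x, y, −x, −y⟩) ∈ ℝ⁴. -/
noncomputable def lnHash (x y : ℝ) : EuclideanSpace ℝ (Fin 4) :=
  layerNorm (WithLp.toLp 2 ![x, y, -x, -y] : EuclideanSpace ℝ (Fin 4))

/-!
The vector ⟨x, y, −x, −y⟩ already has mean zero, so φ(x, y) is just its normalization: a unit
vector. By Cauchy–Schwarz the inner product of two unit vectors is at most 1, with equality only
when they coincide; and φ_x determines x as the ratio of its first two coordinates.
-/

theorem layerNorm_of_sum_eq_zero {ι : Type*} [Fintype ι] {v : EuclideanSpace ℝ ι}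
    (hv : ∑ i, v i = 0) : layerNorm v = ‖v‖⁻¹ • v := by
  simp [layerNorm, hv]

theorem lnHash_eq_inv_norm_smul (x y : ℝ) :
    lnHash x y = ‖(WithLp.toLp 2 ![x, y, -x, -y] : EuclideanSpace ℝ (Fin 4))‖⁻¹ •
      (WithLp.toLp 2 ![x, y, -x, -y] : EuclideanSpace ℝ (Fin 4)) :=
  layerNorm_of_sum_eq_zero (by simp [Fin.sum_univ_four])

theorem norm_lnHash {x y : ℝ} (h : (x, y) ≠ (0, 0)) : ‖lnHash x y‖ = 1 := by
  rw [lnHash_eq_inv_norm_smul]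
  refine norm_smul_inv_norm fun hv => h ?_
  have hx := congrArg (· 0) hv
  have hy := congrArg (· 1) hv
  simp_all

theorem lnHash_apply_zero_div_apply_one (x : ℝ) {y : ℝ} (hy : y ≠ 0) :
    lnHash x y 0 / lnHash x y 1 = x / y := by
  have hv : (WithLp.toLp 2 ![x, y, -x, -y] : EuclideanSpace ℝ (Fin 4)) ≠ 0 :=
    fun hv => hy (by simpa using congrArg (· 1) hv)
  rw [lnHash_eq_inv_norm_smul]
  simp [mul_div_mul_left, hv]

theorem lnHash_left_injective {y : ℝ} (hy : y ≠ 0) : Function.Injective (lnHash · y) := by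
  intro q k hqk
  have hratio := congrArg (fun u : EuclideanSpace ℝ (Fin 4) => u 0 / u 1) hqk
  simp only [lnHash_apply_zero_div_apply_one _ hy] at hratio
  exact (div_left_inj' hy).1 hratio

/-- φ(q,1) · φ(k,1) ≤ 1, with strict inequality whenever q ≠ k; the inner product is
uniquely maximized (with value 1) at k = q. -/
theorem lnHash_inner_le_one_and_unique_max (q k : ℝ) :
    ⟪lnHash q 1, lnHash k 1⟫ ≤ 1 ∧
      (q ≠ k → ⟪lnHash q 1, lnHash k 1⟫ < 1) ∧
      ⟪lnHash q 1, lnHash q 1⟫ = 1 := by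
  have hq : ‖lnHash q 1‖ = 1 := norm_lnHash (by simp)
  have hk : ‖lnHash k 1‖ = 1 := norm_lnHash (by simp)
  refine ⟨real_inner_le_one_of_norm_eq_one hq hk, fun hqk => ?_,
    inner_self_eq_one_of_norm_eq_one hq⟩
  exact (inner_lt_one_iff_real_of_norm_eq_one hq hk).2
    ((lnHash_left_injective one_ne_zero).ne hqk)
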